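/- arXiv:1712.01250 — 3 statements merged into one kernel-verified Lean document; each statement's English description precedes it below -/
import Mathlib

section
/- Given a P-kernel κ on a weakly ranked poset P, there exists a unique g ∈ 𝒮_{1/2}(P) such that ḡ = gκ. (Existence and uniqueness of the left Kazhdan-Lusztig-Stanley function.) -/
open Polynomial

namespace KLS

noncomputable section

variable {P : Type*} [PartialOrder P] [LocallyFiniteOrder P] [DecidableEq P]

/-- Convolution product in the incidence algebra `I(P)`. -/
def conv (f g : P → P → Polynomial ℤ) : P → P → Polynomial ℤ :=
  fun x z => ∑ y ∈ Finset.Icc x z, f x y * g y z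

/-- The identity element `δ` of the incidence algebra. -/
def delta : P → P → Polynomial ℤ := fun x y => if x = y then 1 else 0

/-- Pointwise sum in the incidence algebra. -/
def add (f g : P → P → Polynomial ℤ) : P → P → Polynomial ℤ :=
  fun x y => f x y + g x y

/-- The bar involution `f̄_{xy}(t) = t^{r_{xy}} f_{xy}(t⁻¹)`. -/
def bar (r : P → P → ℕ) (f : P → P → Polynomial ℤ) : P → P → Polynomial ℤ :=
  fun x y => (f x y).reflect (r x y)

/-- The hat involution `ĥ_{xy}(t) = (-1)^{r_{xy}} h_{xy}(t)`. -/
def hat (r : P → P → ℕ) (f : P → P → Polynomial ℤ) : P → P → Polynomial ℤ :=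
  fun x y => (-1 : Polynomial ℤ) ^ (r x y) * f x y

/-- `r` is a weak rank function: positive on strict pairs and additive. -/
def IsWeakRank (r : P → P → ℕ) : Prop :=
  (∀ x y : P, x < y → 0 < r x y) ∧
    ∀ x y z : P, x ≤ y → y ≤ z → r x y + r y z = r x z

/-- Membership in the subring `𝒮(P)`: `deg f_{xy} ≤ r_{xy}`. -/
def InS (r : P → P → ℕ) (f : P → P → Polynomial ℤ) : Prop :=
  ∀ x y : P, x ≤ y → (f x y).natDegree ≤ r x y

/-- Membership in `𝒮_{1/2}(P)`: `f_{xx} = 1` and `deg f_{xy} < r_{xy}/2`. -/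
def InHalf (r : P → P → ℕ) (f : P → P → Polynomial ℤ) : Prop :=
  (∀ x : P, f x x = 1) ∧ ∀ x y : P, x < y → 2 * (f x y).natDegree < r x y

/-- An incidence function vanishes off the order relation. -/
def Supported (f : P → P → Polynomial ℤ) : Prop :=
  ∀ x y : P, ¬ x ≤ y → f x y = 0

/-- `κ` is a `P`-kernel: `κ ∈ 𝒮(P)`, `κ_{xx} = 1` and `κ⁻¹ = κ̄`. -/
def IsKernel (r : P → P → ℕ) (κ : P → P → Polynomial ℤ) : Prop :=
  InS r κ ∧ (∀ x : P, κ x x = 1) ∧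
    (∀ x z : P, x ≤ z → conv κ (bar r κ) x z = delta x z) ∧
    (∀ x z : P, x ≤ z → conv (bar r κ) κ x z = delta x z)


/-! ### Auxiliary machinery for the proof -/

/-- The "lower half" truncation: coefficients `i` with `2 i < N`. -/
def lowHalf (N : ℕ) (f : Polynomial ℤ) : Polynomial ℤ :=
  ∑ i ∈ Finset.range ((N + 1) / 2), C (f.coeff i) * X ^ i

lemma coeff_lowHalf (N : ℕ) (f : Polynomial ℤ) (j : ℕ) :
    (lowHalf N f).coeff j = if 2 * j < N then f.coeff j else 0 := by
  unfold lowHalf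
  rw [finset_sum_coeff]
  simp only [coeff_C_mul, coeff_X_pow, mul_ite, mul_one, mul_zero]
  rw [Finset.sum_ite_eq (Finset.range ((N + 1) / 2)) j (fun i => f.coeff i)]
  by_cases h : 2 * j < N
  · rw [if_pos (Finset.mem_range.mpr (by omega)), if_pos h]
  · rw [if_neg (by rw [Finset.mem_range]; omega), if_neg h]

lemma natDegree_lowHalf_lt {N : ℕ} (hN : 0 < N) (f : Polynomial ℤ) :
    2 * (lowHalf N f).natDegree < N := by
  have h : (lowHalf N f).natDegree ≤ (N - 1) / 2 := by
    rw [natDegree_le_iff_coeff_eq_zero]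
    intro j hj
    rw [coeff_lowHalf, if_neg (by omega)]
  omega

lemma reflect_sum {ι : Type*} (s : Finset ι) (f : ι → Polynomial ℤ) (N : ℕ) :
    reflect N (∑ i ∈ s, f i) = ∑ i ∈ s, reflect N (f i) := by
  ext j
  simp [coeff_reflect, finset_sum_coeff]

lemma reflect_sub' (N : ℕ) (p q : Polynomial ℤ) :
    reflect N (p - q) = reflect N p - reflect N q := by
  ext j; simp [coeff_reflect]

lemma reflect_zero_eq (p : Polynomial ℤ) : reflect 0 p = p := by
  ext j
  rw [coeff_reflect]
  rcases Nat.eq_zero_or_pos j with rfl | h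
  · simp
  · rw [revAt_eq_self_of_lt h]

/-- Key reconstruction: if `f` has degree `≤ N` and is skew under `reflect N`, then
`g := -(lowHalf N f)` satisfies `reflect N g = g + f`. -/
lemma reconstruct (N : ℕ) (f : Polynomial ℤ) (hdeg : f.natDegree ≤ N)
    (hskew : reflect N f = -f) :
    reflect N (-(lowHalf N f)) = -(lowHalf N f) + f := by
  have hc : ∀ j, f.coeff (revAt N j) = -f.coeff j := by
    intro j
    have := congrArg (fun p => Polynomial.coeff p j) hskew
    simpa [coeff_reflect] using this
  ext j
  rw [coeff_reflect, coeff_add, coeff_neg, coeff_neg, coeff_lowHalf]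
  by_cases hjN : j ≤ N
  · rw [revAt_le hjN, coeff_lowHalf]
    have hrevc : f.coeff (N - j) = -f.coeff j := by
      have := hc j; rwa [revAt_le hjN] at this
    rcases lt_trichotomy (2 * j) N with h | h | h
    · rw [if_neg (by omega), if_pos h]; ring
    · rw [if_neg (by omega), if_neg (by omega)]
      have hNj : N - j = j := by omega
      rw [hNj] at hrevc
      have : f.coeff j = 0 := by omega
      rw [this]; ring
    · rw [if_pos (by omega), if_neg (by omega), hrevc]; ring
  · rw [revAt_eq_self_of_lt (by omega : N < j), coeff_lowHalf, if_neg (by omega)]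
    rw [coeff_eq_zero_of_natDegree_lt (by omega : f.natDegree < j)]
    ring

/-- A polynomial of degree `< N/2` fixed by `reflect N` is zero. -/
lemma small_eq_zero {N : ℕ} {d : Polynomial ℤ} (hd : 2 * d.natDegree < N)
    (h : reflect N d = d) : d = 0 := by
  by_contra hne
  have hm : d.coeff d.natDegree ≠ 0 := leadingCoeff_ne_zero.mpr hne
  have h1 : d.coeff (N - d.natDegree) = d.coeff d.natDegree := by
    have := congrArg (fun p => Polynomial.coeff p (N - d.natDegree)) h
    simp only [coeff_reflect] at this
    rw [revAt_le (by omega : N - d.natDegree ≤ N),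
      Nat.sub_sub_self (by omega : d.natDegree ≤ N)] at this
    exact this.symm
  have h2 : d.coeff (N - d.natDegree) = 0 :=
    coeff_eq_zero_of_natDegree_lt (by omega)
  exact hm (h1.symm.trans h2)

lemma rank_diag {P : Type*} [PartialOrder P] {r : P → P → ℕ}
    (hr : IsWeakRank r) (z : P) : r z z = 0 := by
  have := hr.2 z z z le_rfl le_rfl; omega

open Classical in
/-- The KLS function, defined by well-founded recursion on the weak rank. -/
def kls (r : P → P → ℕ) (hr : IsWeakRank r) (κ : P → P → Polynomial ℤ)
    (x z : P) : Polynomial ℤ :=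
  if hxz : x ≤ z then
    if hx : x = z then 1
    else
      -(lowHalf (r x z)
        (∑ y ∈ ((Finset.Icc x z).erase z).attach, kls r hr κ x y.1 * κ y.1 z))
  else 0
termination_by r x z
decreasing_by
  have hy := y.2
  rw [Finset.mem_erase, Finset.mem_Icc] at hy
  have hlt : (y : P) < z := lt_of_le_of_ne hy.2.2 hy.1
  have h1 := hr.2 x y.1 z hy.2.1 hy.2.2
  have h2 := hr.1 y.1 z hlt
  omega

variable {r : P → P → ℕ} {κ : P → P → Polynomial ℤ}

lemma kls_diag (hr : IsWeakRank r) (x : P) : kls r hr κ x x = 1 := by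
  rw [kls]; simp

lemma kls_not_le (hr : IsWeakRank r) {x z : P} (h : ¬x ≤ z) : kls r hr κ x z = 0 := by
  rw [kls]; simp [h]

lemma kls_of_lt (hr : IsWeakRank r) {x z : P} (h : x ≤ z) (hne : x ≠ z) :
    kls r hr κ x z =
      -(lowHalf (r x z) (∑ y ∈ (Finset.Icc x z).erase z, kls r hr κ x y * κ y z)) := by
  rw [kls, dif_pos h, dif_neg hne,
    Finset.sum_attach ((Finset.Icc x z).erase z) (fun y => kls r hr κ x y * κ y z)]

lemma kls_half_deg (hr : IsWeakRank r) {x z : P} (h : x < z) :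
    2 * (kls r hr κ x z).natDegree < r x z := by
  rw [kls_of_lt hr h.le h.ne, natDegree_neg]
  exact natDegree_lowHalf_lt (hr.1 x z h) _

lemma kls_deg_le (hr : IsWeakRank r) {x z : P} (h : x ≤ z) :
    (kls r hr κ x z).natDegree ≤ r x z := by
  rcases eq_or_lt_of_le h with rfl | hlt
  · rw [kls_diag hr]; simp
  · have := kls_half_deg (κ := κ) hr hlt; omega

lemma bar_kernel_diag (hr : IsWeakRank r) (hκ : IsKernel r κ) (z : P) :
    bar r κ z z = 1 := by
  unfold bar
  rw [rank_diag hr, hκ.2.1 z, reflect_zero_eq]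

lemma kernel_step (hr : IsWeakRank r) (hκ : IsKernel r κ) {w z : P} (hw : w < z) :
    ∑ y ∈ (Finset.Icc w z).erase z, κ w y * bar r κ y z = -κ w z := by
  have h0 := hκ.2.2.1 w z hw.le
  unfold conv delta at h0
  rw [if_neg hw.ne] at h0
  have hz : z ∈ Finset.Icc w z := Finset.mem_Icc.mpr ⟨hw.le, le_rfl⟩
  have hsplit := Finset.sum_erase_add (Finset.Icc w z)
    (fun y => κ w y * bar r κ y z) hz
  rw [h0] at hsplit
  simp only [bar_kernel_diag hr hκ, mul_one] at hsplit
  linear_combination hsplit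

/-- The main recursion: `kls` satisfies the defining equation `ḡ = gκ`. -/
lemma kls_spec (hr : IsWeakRank r) (hκ : IsKernel r κ) (x z : P) (h : x ≤ z) :
    reflect (r x z) (kls r hr κ x z) =
      ∑ y ∈ Finset.Icc x z, kls r hr κ x y * κ y z := by
  suffices H : ∀ n x z, x ≤ z → r x z = n →
      reflect (r x z) (kls r hr κ x z) =
        ∑ y ∈ Finset.Icc x z, kls r hr κ x y * κ y z from H (r x z) x z h rfl
  classical
  intro n
  induction n using Nat.strong_induction_on with
  | _ n ih =>
    intro x z hxz hn
    rcases eq_or_lt_of_le hxz with rfl | hlt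
    · rw [rank_diag hr, kls_diag hr, reflect_zero_eq, Finset.Icc_self,
        Finset.sum_singleton, kls_diag hr, hκ.2.1 x, mul_one]
    · set E := (Finset.Icc x z).erase z with hE
      set F := ∑ y ∈ E, kls r hr κ x y * κ y z with hF
      have hmemE : ∀ y ∈ E, x ≤ y ∧ y < z := by
        intro y hy
        rw [hE, Finset.mem_erase, Finset.mem_Icc] at hy
        exact ⟨hy.2.1, lt_of_le_of_ne hy.2.2 hy.1⟩
      have hrlt : ∀ y ∈ E, r x y < n ∧ r x y + r y z = r x z := by
        intro y hy
        obtain ⟨h1, h2⟩ := hmemE y hy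
        have h3 := hr.2 x y z h1 h2.le
        have h4 := hr.1 y z h2
        exact ⟨by omega, h3⟩
      have hkls : kls r hr κ x z = -(lowHalf (r x z) F) := kls_of_lt hr hlt.le hlt.ne
      have hz : z ∈ Finset.Icc x z := Finset.mem_Icc.mpr ⟨hlt.le, le_rfl⟩
      have hFdeg : F.natDegree ≤ r x z := by
        apply Polynomial.natDegree_sum_le_of_forall_le
        intro y hy
        obtain ⟨h1, h2⟩ := hmemE y hy
        calc (kls r hr κ x y * κ y z).natDegree
            ≤ (kls r hr κ x y).natDegree + (κ y z).natDegree := natDegree_mul_le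
          _ ≤ r x y + r y z := add_le_add (kls_deg_le hr h1) (hκ.1 y z h2.le)
          _ = r x z := (hrlt y hy).2
      have hskew : reflect (r x z) F = -F := by
        have step1 : reflect (r x z) F =
            ∑ y ∈ E, reflect (r x y) (kls r hr κ x y) * reflect (r y z) (κ y z) := by
          rw [hF, reflect_sum]
          apply Finset.sum_congr rfl
          intro y hy
          obtain ⟨h1, h2⟩ := hmemE y hy
          rw [← (hrlt y hy).2]
          exact Polynomial.reflect_mul _ _ (kls_deg_le hr h1) (hκ.1 y z h2.le)
        have step2 : ∀ y ∈ E, reflect (r x y) (kls r hr κ x y) =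
            ∑ w ∈ Finset.Icc x y, kls r hr κ x w * κ w y := by
          intro y hy
          exact ih (r x y) (hrlt y hy).1 x y (hmemE y hy).1 rfl
        rw [step1]
        calc ∑ y ∈ E, reflect (r x y) (kls r hr κ x y) * reflect (r y z) (κ y z)
            = ∑ y ∈ E, ∑ w ∈ Finset.Icc x y,
                kls r hr κ x w * κ w y * reflect (r y z) (κ y z) := by
              apply Finset.sum_congr rfl
              intro y hy
              rw [step2 y hy, Finset.sum_mul]
          _ = ∑ y ∈ E, ∑ w ∈ Finset.Icc x z,
                if w ≤ y then kls r hr κ x w * κ w y * reflect (r y z) (κ y z) else 0 := by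
              apply Finset.sum_congr rfl
              intro y hy
              have hIcc : Finset.Icc x y = (Finset.Icc x z).filter (fun w => w ≤ y) := by
                ext w
                simp only [Finset.mem_Icc, Finset.mem_filter]
                constructor
                · rintro ⟨h1, h2⟩; exact ⟨⟨h1, h2.trans (hmemE y hy).2.le⟩, h2⟩
                · rintro ⟨⟨h1, _⟩, h2⟩; exact ⟨h1, h2⟩
              rw [hIcc, Finset.sum_filter]
          _ = ∑ w ∈ Finset.Icc x z, ∑ y ∈ E,
                if w ≤ y then kls r hr κ x w * κ w y * reflect (r y z) (κ y z) else 0 :=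
              Finset.sum_comm
          _ = ∑ w ∈ Finset.Icc x z, kls r hr κ x w *
                ∑ y ∈ (Finset.Icc w z).erase z, κ w y * reflect (r y z) (κ y z) := by
              apply Finset.sum_congr rfl
              intro w hw
              rw [Finset.mem_Icc] at hw
              have hset : (Finset.Icc w z).erase z = E.filter (fun y => w ≤ y) := by
                ext y
                simp only [hE, Finset.mem_erase, Finset.mem_Icc, Finset.mem_filter]
                constructor
                · rintro ⟨h1, h2, h3⟩; exact ⟨⟨h1, hw.1.trans h2, h3⟩, h2⟩
                · rintro ⟨⟨h1, _, h3⟩, h2⟩; exact ⟨h1, h2, h3⟩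
              rw [hset, Finset.sum_filter, Finset.mul_sum]
              apply Finset.sum_congr rfl
              intro y hy
              by_cases hwy : w ≤ y
              · rw [if_pos hwy, if_pos hwy, mul_assoc]
              · rw [if_neg hwy, if_neg hwy, mul_zero]
          _ = -F := by
              rw [← Finset.sum_erase_add _ _ hz]
              have hzz : (Finset.Icc z z).erase z = ∅ := by
                rw [Finset.Icc_self, Finset.erase_singleton]
              rw [hzz, Finset.sum_empty, mul_zero, add_zero, hF,
                ← Finset.sum_neg_distrib]
              apply Finset.sum_congr rfl
              intro w hw
              have hwz : w < z := (hmemE w hw).2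
              have : ∑ y ∈ (Finset.Icc w z).erase z, κ w y * reflect (r y z) (κ y z) =
                  -κ w z := kernel_step hr hκ hwz
              rw [this, mul_neg]
      rw [hkls, reconstruct (r x z) F hFdeg hskew,
        ← Finset.sum_erase_add (Finset.Icc x z) (fun y => kls r hr κ x y * κ y z) hz]
      rw [hκ.2.1 z, mul_one, hkls, ← hE, ← hF]
      ring

/-- existence and uniqueness of the left KLS-function of a `P`-kernel. -/
theorem stmt_6 {P : Type*} [PartialOrder P] [LocallyFiniteOrder P] [DecidableEq P]
    (r : P → P → ℕ) (hr : IsWeakRank r)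
    (κ : P → P → Polynomial ℤ) (hκ : IsKernel r κ) :
    ∃! g : P → P → Polynomial ℤ,
      Supported g ∧ InHalf r g ∧
        ∀ x z : P, x ≤ z → bar r g x z = conv g κ x z := by
  classical
  set g := kls r hr κ with hg
  have hspec : ∀ x z : P, x ≤ z → bar r g x z = conv g κ x z := by
    intro x z h
    unfold bar conv
    exact kls_spec hr hκ x z h
  refine ⟨g, ⟨fun x z h => kls_not_le hr h,
    ⟨fun x => kls_diag hr x, fun x z h => kls_half_deg hr h⟩, hspec⟩, ?_⟩
  rintro g' ⟨hs', ⟨hd1', hd2'⟩, he'⟩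
  funext x z
  suffices H : ∀ n x z, r x z = n → g' x z = g x z from H (r x z) x z rfl
  intro n
  induction n using Nat.strong_induction_on with
  | _ n ih =>
    intro x z hn
    by_cases hxz : x ≤ z
    · rcases eq_or_lt_of_le hxz with rfl | hlt
      · rw [hd1' x, hg, kls_diag hr]
      · have hz : z ∈ Finset.Icc x z := Finset.mem_Icc.mpr ⟨hlt.le, le_rfl⟩
        have hsum : ∀ y ∈ (Finset.Icc x z).erase z, g' x y = g x y := by
          intro y hy
          rw [Finset.mem_erase, Finset.mem_Icc] at hy
          have hylt : y < z := lt_of_le_of_ne hy.2.2 hy.1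
          have h1 := hr.2 x y z hy.2.1 hy.2.2
          have h2 := hr.1 y z hylt
          exact ih (r x y) (by omega) x y rfl
        have heq1 := he' x z hxz
        have heq2 := hspec x z hxz
        unfold bar conv at heq1 heq2
        set d := g' x z - g x z with hd
        have hfix : reflect (r x z) d = d := by
          rw [hd, reflect_sub', heq1, heq2,
            ← Finset.sum_erase_add _ (fun y => g' x y * κ y z) hz,
            ← Finset.sum_erase_add _ (fun y => g x y * κ y z) hz,
            hκ.2.1 z, mul_one, mul_one,
            Finset.sum_congr rfl (fun y hy => by rw [hsum y hy])]
          ring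
        have hdeg : 2 * d.natDegree < r x z := by
          have h1 := hd2' x z hlt
          have h2 : 2 * (g x z).natDegree < r x z := kls_half_deg hr hlt
          have h3 : d.natDegree ≤ (g' x z).natDegree ⊔ (g x z).natDegree :=
            Polynomial.natDegree_sub_le _ _
          rw [le_sup_iff] at h3
          rcases h3 with h3 | h3 <;> omega
        have : d = 0 := small_eq_zero hdeg hfix
        have := sub_eq_zero.mp this
        exact this
    · rw [hs' x z hxz, hg, kls_not_le hr hxz]
end
end KLS
end

section
/- Let κ be a P-kernel with Z-function Z = gκf, and let P* be the opposite poset with the same weak rank function. Then κ* is a P*-kernel with left KLS-function f*, right KLS-function g*, and associated Z-function Z*. -/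
open Polynomial

namespace KLS

noncomputable section

variable {P : Type*} [PartialOrder P] [LocallyFiniteOrder P] [DecidableEq P]

/-- The dual of an incidence function, on the opposite poset. -/
def star {P : Type*} (h : P → P → Polynomial ℤ) : Pᵒᵈ → Pᵒᵈ → Polynomial ℤ :=
  fun a b => h (OrderDual.ofDual b) (OrderDual.ofDual a)

/-- The dual rank function. -/
def rstar {P : Type*} (r : P → P → ℕ) : Pᵒᵈ → Pᵒᵈ → ℕ :=
  fun a b => r (OrderDual.ofDual b) (OrderDual.ofDual a)

section Aux

variable {P : Type*} [PartialOrder P] [LocallyFiniteOrder P] [DecidableEq P]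

lemma conv_star (u v : P → P → Polynomial ℤ) :
    conv (star u) (star v) = star (conv v u) := by
  funext a b
  unfold conv star
  refine Finset.sum_nbij' (fun y => OrderDual.ofDual y) (fun y => OrderDual.toDual y)
    ?_ ?_ (fun _ _ => rfl) (fun _ _ => rfl) ?_
  · intro y hy
    simp only [Finset.mem_Icc] at hy ⊢
    exact ⟨hy.2, hy.1⟩
  · intro y hy
    simp only [Finset.mem_Icc] at hy ⊢
    exact ⟨hy.2, hy.1⟩
  · intro y _
    exact mul_comm _ _

lemma delta_star (a b : Pᵒᵈ) :
    delta a b = delta (OrderDual.ofDual b) (OrderDual.ofDual a) := by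
  rcases eq_or_ne a b with h | h
  · subst h; rfl
  · have h' : OrderDual.ofDual b ≠ OrderDual.ofDual a :=
      fun hc => h (OrderDual.ofDual.injective hc).symm
    simp [delta, h, h']

lemma conv_assoc (u v w : P → P → Polynomial ℤ) (x z : P) :
    conv (conv u v) w x z = conv u (conv v w) x z := by
  unfold conv
  simp only [Finset.sum_mul, Finset.mul_sum]
  rw [Finset.sum_comm' (s := Finset.Icc x z) (t := fun y => Finset.Icc x y)
    (t' := Finset.Icc x z) (s' := fun w => Finset.Icc w z) (fun y w => by
      simp only [Finset.mem_Icc]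
      constructor
      · rintro ⟨⟨h1, h2⟩, h3, h4⟩; exact ⟨⟨h4, h2⟩, h3, h4.trans h2⟩
      · rintro ⟨⟨h1, h2⟩, h3, h4⟩; exact ⟨⟨h3.trans h1, h2⟩, h3, h1⟩)]
  exact Finset.sum_congr rfl fun w _ => Finset.sum_congr rfl fun y _ => by ring

end Aux

/-- `κ*` is a `P*`-kernel with left KLS-function `f*`, right
KLS-function `g*`, and `Z`-function `Z*`. -/
theorem stmt_12 {P : Type*} [PartialOrder P] [LocallyFiniteOrder P] [DecidableEq P]
    (r : P → P → ℕ) (hr : IsWeakRank r)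
    (κ f g : P → P → Polynomial ℤ) (hκ : IsKernel r κ)
    (hfhalf : InHalf r f) (hfsupp : Supported f)
    (hf : ∀ x z : P, x ≤ z → bar r f x z = conv κ f x z)
    (hghalf : InHalf r g) (hgsupp : Supported g)
    (hg : ∀ x z : P, x ≤ z → bar r g x z = conv g κ x z) :
    IsKernel (rstar r) (star κ) ∧
    (∀ a b : Pᵒᵈ, a ≤ b →
      bar (rstar r) (star f) a b = conv (star f) (star κ) a b) ∧
    (∀ a b : Pᵒᵈ, a ≤ b →
      bar (rstar r) (star g) a b = conv (star κ) (star g) a b) ∧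
    (∀ a b : Pᵒᵈ, a ≤ b →
      star (conv g (conv κ f)) a b = conv (star f) (conv (star κ) (star g)) a b) := by
  have hbar : ∀ (h : P → P → Polynomial ℤ),
      bar (rstar r) (star h) = star (bar r h) := fun _ => rfl
  obtain ⟨hκS, hκd, hκ1, hκ2⟩ := hκ
  refine ⟨⟨fun a b hab => hκS _ _ hab, fun a => hκd _, ?_, ?_⟩, ?_, ?_, ?_⟩
  · intro a b hab
    rw [hbar, conv_star, delta_star]
    exact hκ2 _ _ hab
  · intro a b hab
    rw [hbar, conv_star, delta_star]
    exact hκ1 _ _ hab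
  · intro a b hab
    rw [hbar, conv_star]
    exact hf _ _ hab
  · intro a b hab
    rw [hbar, conv_star]
    exact hg _ _ hab
  · intro a b _
    rw [conv_star, conv_star]
    exact (conv_assoc g κ f _ _).symm
end
end KLS
end

section
/- Let κ be an alternating P-kernel (i.e., κ̄_{xy}(t) = (-1)^{r_{xy}} κ_{xy}(t) for all x ≤ y), with right KLS-function f and left KLS-function g. Then ĝ = f^{-1} and f̂ = g^{-1}, where ĥ_{xy}(t) := (-1)^{r_{xy}} h_{xy}(t). -/
open Polynomial

/-!
Write `ĝ = hat r g`. Because `κ` is alternating and `bar` commutes with `hat`,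
`bar ĝ = hat (g κ) = ĝ κ̂ = ĝ κ̄`, so `bar (ĝ f) = ĝ κ̄ κ f = ĝ f`. On the other hand `ĝ f` lies in
`𝒮_{1/2}(P)`, and an off-diagonal entry of degree `< r/2` fixed by `t ↦ t^r p(t⁻¹)` vanishes; hence
`ĝ f = δ`. A one-sided inverse with unit diagonal is two-sided, and `hat` is a ring involution, so
applying it to `f ĝ = δ` and `ĝ f = δ` gives `f̂ g = δ = g f̂`.
-/

namespace Polynomial

variable {R : Type*}

theorem reflect_sum [Semiring R] {ι : Type*} (N : ℕ) (s : Finset ι) (p : ι → R[X]) :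
    reflect N (∑ i ∈ s, p i) = ∑ i ∈ s, reflect N (p i) :=
  map_sum (⟨⟨reflect N, reflect_zero⟩, fun f g => reflect_add f g N⟩ : R[X] →+ R[X]) p s

theorem eq_zero_of_reflect_eq_self [Semiring R] {p : R[X]} {N : ℕ}
    (hdeg : 2 * p.natDegree < N) (hp : p.reflect N = p) : p = 0 := by
  by_contra hne
  have hlead : (p.reflect N).coeff (N - p.natDegree) = p.coeff p.natDegree := by
    rw [coeff_reflect, revAt_le (by omega), Nat.sub_sub_self (by omega)]
  rw [hp, coeff_eq_zero_of_natDegree_lt (by omega)] at hlead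
  exact hne (leadingCoeff_eq_zero.mp hlead.symm)

theorem natDegree_neg_one_pow_mul [Ring R] (n : ℕ) (p : R[X]) :
    ((-1) ^ n * p).natDegree = p.natDegree := by
  rcases neg_one_pow_eq_or R[X] n with h | h <;> simp [h]

end Polynomial

namespace KLS

open Finset

section Involutions

variable {P : Type*} (r : P → P → ℕ) (a : P → P → ℤ[X])

theorem hat_hat : hat r (hat r a) = a := by
  funext x y
  simp [hat, ← mul_assoc, ← mul_pow]

theorem bar_hat : bar r (hat r a) = hat r (bar r a) := by
  funext x y
  have hC : (-1 : ℤ[X]) ^ r x y = C ((-1) ^ r x y) := by simp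
  simp only [bar, hat, hC, reflect_C_mul]

end Involutions

variable {P : Type*} [PartialOrder P] {r : P → P → ℕ} {a b : P → P → ℤ[X]}

theorem IsWeakRank.rank_self (hr : IsWeakRank r) (x : P) : r x x = 0 := by
  have := hr.2 x x x le_rfl le_rfl
  omega

theorem InHalf.two_mul_natDegree_le (ha : InHalf r a) {x y : P} (hxy : x ≤ y) :
    2 * (a x y).natDegree ≤ r x y := by
  rcases hxy.lt_or_eq with hlt | rfl
  · exact (ha.2 x y hlt).le
  · simp [ha.1]

theorem InHalf.inS (ha : InHalf r a) : InS r a := fun _ _ hxy =>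
  (Nat.le_mul_of_pos_left _ two_pos).trans (ha.two_mul_natDegree_le hxy)

theorem InHalf.hat (hr : IsWeakRank r) (ha : InHalf r a) : InHalf r (hat r a) :=
  ⟨fun x => by simp [KLS.hat, hr.rank_self, ha.1], fun x y hxy => by
    simpa only [KLS.hat, natDegree_neg_one_pow_mul] using ha.2 x y hxy⟩

theorem eq_delta_of_bar_eq_self [DecidableEq P] (ha : InHalf r a)
    (h : ∀ x z, x ≤ z → bar r a x z = a x z) : ∀ x z, x ≤ z → a x z = delta x z := by
  intro x z hxz
  rcases hxz.lt_or_eq with hlt | rfl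
  · rw [delta, if_neg hlt.ne]
    exact eq_zero_of_reflect_eq_self (ha.2 x z hlt) (h x z hxz)
  · simp [delta, ha.1]

theorem hat_eq_delta [DecidableEq P] (hr : IsWeakRank r) (ha : ∀ x z, x ≤ z → a x z = delta x z) :
    ∀ x z, x ≤ z → hat r a x z = delta x z := by
  intro x z hxz
  rw [hat, ha x z hxz]
  by_cases h : x = z
  · subst h
    simp [hr.rank_self]
  · simp [delta, h]

section Convolution

variable [LocallyFiniteOrder P]

theorem conv_congr {a' b' : P → P → ℤ[X]} (ha : ∀ x y, x ≤ y → a x y = a' x y)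
    (hb : ∀ x y, x ≤ y → b x y = b' x y) (x z : P) : conv a b x z = conv a' b' x z :=
  sum_congr rfl fun _ hy => by rw [ha _ _ (mem_Icc.1 hy).1, hb _ _ (mem_Icc.1 hy).2]

theorem conv_assoc_s13 (c : P → P → ℤ[X]) : conv (conv a b) c = conv a (conv b c) := by
  funext x z
  simp only [conv, sum_mul, mul_sum, mul_assoc]
  exact sum_comm' fun w y => by
    simp only [mem_Icc]
    constructor <;> rintro ⟨⟨h₁, h₂⟩, h₃, h₄⟩ <;> exact ⟨⟨by order, by order⟩, by order, by order⟩

theorem conv_sub (c : P → P → ℤ[X]) : conv a (b - c) = conv a b - conv a c := by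
  funext x z
  simp only [conv, Pi.sub_apply, mul_sub, sum_sub_distrib]

theorem eq_zero_of_conv_eq_zero {v : P → P → ℤ[X]} (ha : ∀ x, a x x = 1)
    (h : ∀ x z, x ≤ z → conv a v x z = 0) : ∀ x z, x ≤ z → v x z = 0 := by
  intro x z
  induction hn : (Icc x z).card using Nat.strong_induction_on generalizing x with
  | _ n ih =>
  intro hxz
  have hsum := h x z hxz
  rwa [conv, sum_eq_single_of_mem x (mem_Icc.2 ⟨le_rfl, hxz⟩), ha, one_mul] at hsum
  intro y hy hyx
  have hxy : x < y := (mem_Icc.1 hy).1.lt_of_ne' hyx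
  have hcard := card_lt_card (Icc_ssubset_Icc_left hxz hxy le_rfl)
  rw [ih _ (hn ▸ hcard) y rfl (mem_Icc.1 hy).2, mul_zero]

theorem hat_conv (hr : IsWeakRank r) : hat r (conv a b) = conv (hat r a) (hat r b) := by
  funext x z
  simp only [hat, conv, mul_sum]
  refine sum_congr rfl fun y hy => ?_
  rw [← hr.2 x y z (mem_Icc.1 hy).1 (mem_Icc.1 hy).2, pow_add]
  ring

theorem bar_conv (hr : IsWeakRank r) (ha : InS r a) (hb : InS r b) :
    bar r (conv a b) = conv (bar r a) (bar r b) := by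
  funext x z
  simp only [bar, conv, reflect_sum]
  refine sum_congr rfl fun y hy => ?_
  obtain ⟨hxy, hyz⟩ := mem_Icc.1 hy
  rw [← hr.2 x y z hxy hyz, reflect_mul _ _ (ha x y hxy) (hb y z hyz)]

theorem InHalf.conv (hr : IsWeakRank r) (ha : InHalf r a) (hb : InHalf r b) :
    InHalf r (conv a b) := by
  refine ⟨fun x => by simp [KLS.conv, ha.1, hb.1], fun x z hxz => ?_⟩
  have hterm : ∀ y ∈ Icc x z, (a x y * b y z).natDegree ≤ (r x z - 1) / 2 := by
    intro y hy
    obtain ⟨hxy, hyz⟩ := mem_Icc.1 hy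
    have hadd := hr.2 x y z hxy hyz
    have hmul : (a x y * b y z).natDegree ≤ (a x y).natDegree + (b y z).natDegree :=
      natDegree_mul_le
    rcases hxy.lt_or_eq with hxy | rfl
    · have := ha.2 x y hxy
      have := hb.two_mul_natDegree_le hyz
      omega
    · have := ha.two_mul_natDegree_le hxy
      have := hb.2 x z hxz
      omega
  have := natDegree_sum_le_of_forall_le _ _ hterm
  have := hr.1 x z hxz
  simp only [KLS.conv]
  omega

variable [DecidableEq P]

theorem delta_conv {x z : P} (hxz : x ≤ z) : conv delta a x z = a x z := by
  rw [conv, sum_eq_single_of_mem x (mem_Icc.2 ⟨le_rfl, hxz⟩) fun y _ hy => by simp [delta, hy.symm]]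
  simp [delta]

theorem conv_delta {x z : P} (hxz : x ≤ z) : conv a delta x z = a x z := by
  rw [conv, sum_eq_single_of_mem z (mem_Icc.2 ⟨hxz, le_rfl⟩) fun y _ hy => by simp [delta, hy]]
  simp [delta]

theorem conv_eq_delta_symm (ha : ∀ x, a x x = 1) (hab : ∀ x z, x ≤ z → conv a b x z = delta x z) :
    ∀ x z, x ≤ z → conv b a x z = delta x z := by
  have hzero : ∀ x z, x ≤ z → conv a (conv b a - delta) x z = 0 := by
    intro x z hxz
    rw [conv_sub, Pi.sub_apply, Pi.sub_apply, ← conv_assoc_s13, conv_congr hab (fun _ _ _ => rfl),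
      delta_conv hxz, conv_delta hxz, sub_self]
  exact fun x z hxz => sub_eq_zero.1 (eq_zero_of_conv_eq_zero ha hzero x z hxz)

end Convolution

theorem stmt_13_general {P : Type*} [PartialOrder P] [LocallyFiniteOrder P] [DecidableEq P]
    (r : P → P → ℕ) (hr : IsWeakRank r)
    (κ f g : P → P → Polynomial ℤ) (hκ : IsKernel r κ)
    (halt : ∀ x y : P, x ≤ y → bar r κ x y = hat r κ x y)
    (hfhalf : InHalf r f)
    (hf : ∀ x z : P, x ≤ z → bar r f x z = conv κ f x z)
    (hghalf : InHalf r g)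
    (hg : ∀ x z : P, x ≤ z → bar r g x z = conv g κ x z) :
    (∀ x z : P, x ≤ z → conv (hat r g) f x z = delta x z) ∧
    (∀ x z : P, x ≤ z → conv f (hat r g) x z = delta x z) ∧
    (∀ x z : P, x ≤ z → conv (hat r f) g x z = delta x z) ∧
    (∀ x z : P, x ≤ z → conv g (hat r f) x z = delta x z) := by
  have hĝ : InHalf r (hat r g) := hghalf.hat hr
  have bar_ĝ : ∀ x y, x ≤ y → bar r (hat r g) x y = conv (hat r g) (bar r κ) x y := by
    intro x y hxy
    calc bar r (hat r g) x y = hat r (conv g κ) x y := by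
          rw [bar_hat]
          simp only [hat, hg x y hxy]
      _ = conv (hat r g) (bar r κ) x y := by
          rw [hat_conv hr]
          exact conv_congr (fun _ _ _ => rfl) (fun u v huv => (halt u v huv).symm) x y
  have left : ∀ x z, x ≤ z → conv (hat r g) f x z = delta x z := by
    refine eq_delta_of_bar_eq_self (hĝ.conv hr hfhalf) fun x z _ => ?_
    calc bar r (conv (hat r g) f) x z = conv (conv (hat r g) (bar r κ)) (conv κ f) x z := by
          rw [bar_conv hr hĝ.inS hfhalf.inS]
          exact conv_congr bar_ĝ hf x z
      _ = conv (hat r g) (conv (conv (bar r κ) κ) f) x z := by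
          simp only [conv_assoc_s13]
      _ = conv (hat r g) f x z := conv_congr (fun _ _ _ => rfl) (fun y w hyw => by
          rw [conv_congr hκ.2.2.2 (fun _ _ _ => rfl), delta_conv hyw]) x z
  have right := conv_eq_delta_symm hĝ.1 left
  refine ⟨left, right, ?_, ?_⟩
  · simpa only [hat_conv hr, hat_hat] using hat_eq_delta hr right
  · simpa only [hat_conv hr, hat_hat] using hat_eq_delta hr left

/-- for an alternating `P`-kernel `κ`, we have `ĝ = f⁻¹` and `f̂ = g⁻¹`. -/
theorem stmt_13 {P : Type*} [PartialOrder P] [LocallyFiniteOrder P] [DecidableEq P]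
    (r : P → P → ℕ) (hr : IsWeakRank r)
    (κ f g : P → P → Polynomial ℤ) (hκ : IsKernel r κ)
    (halt : ∀ x y : P, x ≤ y → bar r κ x y = hat r κ x y)
    (hfhalf : InHalf r f) (hfsupp : Supported f)
    (hf : ∀ x z : P, x ≤ z → bar r f x z = conv κ f x z)
    (hghalf : InHalf r g) (hgsupp : Supported g)
    (hg : ∀ x z : P, x ≤ z → bar r g x z = conv g κ x z) :
    (∀ x z : P, x ≤ z → conv (hat r g) f x z = delta x z) ∧
    (∀ x z : P, x ≤ z → conv f (hat r g) x z = delta x z) ∧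
    (∀ x z : P, x ≤ z → conv (hat r f) g x z = delta x z) ∧
    (∀ x z : P, x ≤ z → conv g (hat r f) x z = delta x z) :=
  stmt_13_general r hr κ f g hκ halt hfhalf hf hghalf hg
end KLS
end
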